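/- Fix κ > 0 and ρ ∈ ℝ, and define ν(x) = x^{-(3κ - 2ρ - 4)/(2κ)} · exp(-4/(κx)) for x > 0, p(x) = (κ/2)x², and q(x) = 2 + ((κ + 2ρ + 4)/4)x. Then for every twice continuously differentiable function f : ℝ → ℝ whose support is a compact subset of (0, ∞), one has ∫_0^∞ [p(x)·f''(x) + q(x)·f'(x)]·ν(x) dx = 0. -/

import Mathlib

/-!
The density `ν` solves the stationary Fokker–Planck equation `(p ν)' = q ν` on `(0, ∞)`. Hence
`(p f'' + q f') ν = (p ν f')'`, and `p ν f'` is a `C¹` function with compact support in `(0, ∞)`,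
so its derivative integrates to zero.
-/

open MeasureTheory Set

theorem ContDiffOn.contDiff_mul_of_tsupport_subset {𝕜 E : Type*} [NontriviallyNormedField 𝕜]
    [NormedAddCommGroup E] [NormedSpace 𝕜 E] {n : WithTop ℕ∞} {U : Set E} {w g : E → 𝕜}
    (hw : ContDiffOn 𝕜 n w U) (hU : IsOpen U) (hg : ContDiff 𝕜 n g) (hgU : tsupport g ⊆ U) :
    ContDiff 𝕜 n (fun x => w x * g x) :=
  contDiff_iff_contDiffAt.2 fun x => by
    by_cases hx : x ∈ tsupport g
    · exact (hw.contDiffAt (hU.mem_nhds (hgU hx))).mul hg.contDiffAt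
    · refine (contDiffAt_const (c := (0 : 𝕜))).congr_of_eventuallyEq ?_
      filter_upwards [notMem_tsupport_iff_eventuallyEq.1 hx] with y hy
      simp [hy]

theorem integral_Ioi_mul_deriv_deriv_add_deriv_mul_deriv_eq_zero {a : ℝ} {w f : ℝ → ℝ}
    (hw : ContDiffOn ℝ 1 w (Ioi a)) (hf : ContDiff ℝ 2 f) (hfc : HasCompactSupport f)
    (hfa : tsupport f ⊆ Ioi a) :
    ∫ x in Ioi a, (w x * deriv (deriv f) x + deriv w x * deriv f x) = 0 := by
  have hf' : ContDiff ℝ 1 (deriv f) := hf.iterate_deriv' 1 1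
  have hf'a : tsupport (deriv f) ⊆ Ioi a := tsupport_deriv_subset.trans hfa
  have hG := hw.contDiff_mul_of_tsupport_subset isOpen_Ioi hf' hf'a
  have hG_deriv : ∀ x ∈ Ioi a, deriv (fun y => w y * deriv f y) x
      = w x * deriv (deriv f) x + deriv w x * deriv f x := by
    intro x hx
    have hwx := (hw.differentiableOn one_ne_zero x hx).differentiableAt (isOpen_Ioi.mem_nhds hx)
    rw [deriv_fun_mul hwx (hf'.differentiable one_ne_zero x)]
    ring
  rw [← setIntegral_congr_fun measurableSet_Ioi hG_deriv,
    hfc.deriv.mul_left.integral_Ioi_deriv_eq hG a,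
    image_eq_zero_of_notMem_tsupport fun h => lt_irrefl a (hf'a h), mul_zero, neg_zero]

theorem hasDerivAt_sq_mul_rpow_mul_exp_neg_div {a c x : ℝ} (hx : 0 < x) :
    HasDerivAt (fun y => y ^ 2 * (y ^ a * Real.exp (-c / y)))
      (((2 + a) * x + c) * (x ^ a * Real.exp (-c / x))) x := by
  have hpow := Real.hasDerivAt_rpow_const (p := a) (Or.inl hx.ne')
  have hexp := ((hasDerivAt_inv hx.ne').const_mul (-c)).exp
  refine ((hasDerivAt_pow 2 x).fun_mul (hpow.fun_mul hexp)).congr_deriv ?_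
  rw [Real.rpow_sub_one hx.ne']
  field_simp
  ring

theorem contDiffOn_sq_mul_rpow_mul_exp_neg_div (n : WithTop ℕ∞) (a c : ℝ) :
    ContDiffOn ℝ n (fun y => y ^ 2 * (y ^ a * Real.exp (-c / y))) (Ioi 0) :=
  fun x hx => by
    have hx0 : x ≠ 0 := hx.ne'
    fun_prop (disch := assumption)

/-- For the stationary density `ν(x) = x^{-(3κ-2ρ-4)/(2κ)} e^{-4/(κx)}` of the stopped
capacity of SLE_κ(ρ), the expectation of the generator `p f'' + q f'` against `ν`
vanishes for every `C²` test function `f` compactly supported in `(0, ∞)`, where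
`p(x) = (κ/2)x²` and `q(x) = 2 + ((κ+2ρ+4)/4)x`. -/
theorem stationary_density_annihilates_generator
    (κ ρ : ℝ) (hκ : 0 < κ) (ν p q : ℝ → ℝ)
    (hν : ∀ x : ℝ, ν x = x ^ (-((3 * κ - 2 * ρ - 4) / (2 * κ))) * Real.exp (-4 / (κ * x)))
    (hp : ∀ x : ℝ, p x = (κ / 2) * x ^ 2)
    (hq : ∀ x : ℝ, q x = 2 + ((κ + 2 * ρ + 4) / 4) * x)
    (f : ℝ → ℝ) (hf : ContDiff ℝ 2 f) (hsupp : HasCompactSupport f)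
    (hsupp' : tsupport f ⊆ Set.Ioi (0 : ℝ)) :
    ∫ x in Set.Ioi (0 : ℝ), (p x * deriv (deriv f) x + q x * deriv f x) * ν x = 0 := by
  set a := -((3 * κ - 2 * ρ - 4) / (2 * κ))
  have hν' : ∀ y, ν y = y ^ a * Real.exp (-(4 / κ) / y) := fun y => by
    rw [hν, neg_div, neg_div, div_div]
  have hpν : (fun y => p y * ν y)
      = fun y => κ / 2 * (y ^ 2 * (y ^ a * Real.exp (-(4 / κ) / y))) := by
    ext y
    rw [hp, hν']
    ring
  have hflux : ∀ x ∈ Ioi 0, HasDerivAt (fun y => p y * ν y) (q x * ν x) x := fun x hx => by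
    rw [hpν]
    refine ((hasDerivAt_sq_mul_rpow_mul_exp_neg_div hx).const_mul (κ / 2)).congr_deriv ?_
    rw [hq, hν']
    -- the exponent is chosen so that `κ (2 + a) / 2 = (κ + 2ρ + 4) / 4`
    simp only [a]
    field_simp
    ring
  have hw : ContDiffOn ℝ 1 (fun y => p y * ν y) (Ioi 0) :=
    hpν ▸ (contDiffOn_sq_mul_rpow_mul_exp_neg_div 1 a (4 / κ)).const_smul (κ / 2)
  calc ∫ x in Ioi 0, (p x * deriv (deriv f) x + q x * deriv f x) * ν x
      = ∫ x in Ioi 0,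
          (p x * ν x * deriv (deriv f) x + deriv (fun y => p y * ν y) x * deriv f x) :=
        setIntegral_congr_fun measurableSet_Ioi fun x hx => by rw [(hflux x hx).deriv]; ring
    _ = 0 := integral_Ioi_mul_deriv_deriv_add_deriv_mul_deriv_eq_zero hw hf hsupp hsupp'
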